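/- Let M ≥ 1 and let q₀^{(j)}, q₁^{(j)} (0 ≤ j ≤ M−1) and e₀ be positive real numbers. Define α₀ = e₀ + q₁^{(M−1)} and α_i = α_{i−1} q₁^{(M−i−1)} + e₀ ∏_{j=0}^{i−1} q₀^{(M−j−1)} for 1 ≤ i ≤ M−1; define β_{−1} = 0, β₀ = 1 and β_i = β_{i−1} q₀^{(i)} + ∏_{j=0}^{i−1} q₁^{(j)} for 1 ≤ i ≤ M−1. Then for every i = 0, 1, …, M−1: α_{M−1} = α_{M−1−i} ∏_{j=0}^{i−1} q₁^{(j)} + β_{i−1} e₀ ∏_{j=i}^{M−1} q₀^{(j)} (empty products equal 1). -/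

import Mathlib

/-- `alphaRec M q0 q1 e0 i` is the quantity `α_i` of the paper:
`α_0 = e0 + q1^{(M-1)}`, `α_i = α_{i-1} q1^{(M-i-1)} + e0 ∏_{j<i} q0^{(M-j-1)}`. -/
noncomputable def alphaRec (M : ℕ) (q0 q1 : ℕ → ℝ) (e0 : ℝ) : ℕ → ℝ
  | 0 => e0 + q1 (M - 1)
  | i + 1 => alphaRec M q0 q1 e0 i * q1 (M - i - 2) +
      e0 * ∏ j ∈ Finset.range (i + 1), q0 (M - j - 1)

/-- `betaRec q0 q1 i` is the quantity `β_i`: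
`β_0 = 1`, `β_i = β_{i-1} q0^{(i)} + ∏_{j<i} q1^{(j)}`. -/
noncomputable def betaRec (q0 q1 : ℕ → ℝ) : ℕ → ℝ
  | 0 => 1
  | i + 1 => betaRec q0 q1 i * q0 (i + 1) + ∏ j ∈ Finset.range (i + 1), q1 j

lemma prod_reflect (q0 : ℕ → ℝ) (a M : ℕ) (h : a ≤ M) :
    ∏ j ∈ Finset.range (M - a), q0 (M - j - 1) = ∏ j ∈ Finset.Ico a M, q0 j := by
  refine Finset.prod_nbij' (fun j => M - j - 1) (fun k => M - k - 1) ?_ ?_ ?_ ?_ ?_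
  · intro x hx; simp only [Finset.mem_range] at hx; simp only [Finset.mem_Ico]; omega
  · intro x hx; simp only [Finset.mem_Ico] at hx; simp only [Finset.mem_range]; omega
  · intro x hx; simp only [Finset.mem_range] at hx; omega
  · intro x hx; simp only [Finset.mem_Ico] at hx; omega
  · intro x hx; rfl

/-- the relation `α_{M-1} = α_{M-1-i} ∏_{j<i} q1^{(j)} + β_{i-1} e0 ∏_{j=i}^{M-1} q0^{(j)}`
(with `β_{-1} = 0`). -/
theorem stmt_9 (M : ℕ) (hM : 1 ≤ M) (q0 q1 : ℕ → ℝ) (e0 : ℝ)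
    (hq0 : ∀ j < M, 0 < q0 j) (hq1 : ∀ j < M, 0 < q1 j) (he0 : 0 < e0) :
    ∀ i < M, alphaRec M q0 q1 e0 (M - 1) =
      alphaRec M q0 q1 e0 (M - 1 - i) * (∏ j ∈ Finset.range i, q1 j) +
      (if i = 0 then 0 else betaRec q0 q1 (i - 1)) * e0 * ∏ j ∈ Finset.Ico i M, q0 j := by
  intro i
  induction i with
  | zero => intro _; simp
  | succ i ih =>
    intro hi
    have hiM : i < M := Nat.lt_of_succ_lt hi
    have h1 : M - 1 - i = (M - 2 - i) + 1 := by omega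
    have h2 : M - (M - 2 - i) - 2 = i := by omega
    have h3 : (M - 2 - i) + 1 = M - (i + 1) := by omega
    rw [ih hiM, h1, alphaRec, h2, h3, prod_reflect q0 (i + 1) M (by omega)]
    have hsplit : ∏ j ∈ Finset.Ico i M, q0 j =
        q0 i * ∏ j ∈ Finset.Ico (i + 1) M, q0 j := by
      rw [Finset.prod_eq_prod_Ico_succ_bot hiM]
    rw [hsplit]
    have h4 : M - 1 - (i + 1) = M - 2 - i := by omega
    rw [h4, Finset.prod_range_succ]
    cases i with
    | zero => simp [betaRec]
    | succ k =>
      simp only [Nat.succ_ne_zero, if_false, Nat.add_sub_cancel, betaRec]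
      ring
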